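/- Let P be a GMMN instance whose intersection graph IG[P] contains no triangle. Then for every feasible solution N = (π_v)_{v∈P} ∈ Feas(P), the length of N satisfies ‖N‖ = Σ_{(s,t)∈P} d(s,t) − Σ_{{u,v}∈E(IG[P])} ‖π_u ∩ π_v‖. In particular, N is optimal if and only if the total length of segments shared by two M-paths is maximized. -/

import Mathlib

noncomputable section
open scoped Classical

/-- A point in the Euclidean plane. -/
abbrev Point : Type := ℝ × ℝ

/-- The Manhattan distance `d(p, q)`. -/
def manh (p q : Point) : ℝ := |p.1 - q.1| + |p.2 - q.2|

/-- The Euclidean length `‖pq‖` of the segment between `p` and `q`. -/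
def euclen (p q : Point) : ℝ := Real.sqrt ((p.1 - q.1) ^ 2 + (p.2 - q.2) ^ 2)

/-- The segment `pq` is axis-aligned. -/
def axisAligned (p q : Point) : Prop := p.1 = q.1 ∨ p.2 = q.2

/-- `z` lies in the bounding box `B(a, b)` (componentwise between `a ⊓ b` and `a ⊔ b`). -/
def inBox (a b z : Point) : Prop := a ⊓ b ≤ z ∧ z ≤ a ⊔ b

lemma euclen_comm (p q : Point) : euclen p q = euclen q p := by
  unfold euclen; ring_nf

/-- Length of an (unordered) edge. -/
def sym2Len : Sym2 Point → ℝ := Sym2.lift ⟨euclen, euclen_comm⟩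

/-- The length of a network, given by its (finite) edge set. -/
def netLength (N : Finset (Sym2 Point)) : ℝ := ∑ e ∈ N, sym2Len e

/-- A (simple) path in the plane, given by its sequence of (distinct) vertices. -/
structure GPath where
  k : ℕ
  pts : Fin (k + 1) → Point
  inj : Function.Injective pts

/-- The `i`-th edge of a path. -/
def GPath.edge (π : GPath) (i : Fin π.k) : Sym2 Point :=
  s(π.pts i.castSucc, π.pts i.succ)

/-- The edge set of a path. -/
def GPath.edges (π : GPath) : Finset (Sym2 Point) :=
  Finset.image π.edge Finset.univ

/-- The total (Euclidean) length of a path. -/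
def GPath.length (π : GPath) : ℝ :=
  ∑ i : Fin π.k, euclen (π.pts i.castSucc) (π.pts i.succ)

/-- `π` is a Manhattan path (M-path) for the pair `(s, t)`: an `s`–`t` path all of whose
edges are axis-aligned and whose total length equals the Manhattan distance `d(s, t)`. -/
def IsMPath (s t : Point) (π : GPath) : Prop :=
  π.pts 0 = s ∧ π.pts (Fin.last π.k) = t ∧
  (∀ i : Fin π.k, axisAligned (π.pts i.castSucc) (π.pts i.succ)) ∧
  π.length = manh s t

/-- A GMMN instance: a finite set of pairs of points. -/
abbrev Inst : Type := Finset (Point × Point)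

/-- The vertex set of the Hanan grid `H(P)`. -/
def hananV (P : Inst) : Finset Point :=
  ((P.image fun v => v.1.1) ∪ (P.image fun v => v.2.1)) ×ˢ
  ((P.image fun v => v.1.2) ∪ (P.image fun v => v.2.2))

/-- `{p, q}` is an edge of the Hanan grid `H(P)`: an axis-aligned segment between two distinct
grid vertices containing no third grid vertex. -/
def IsHananEdge (P : Inst) (p q : Point) : Prop :=
  p ∈ hananV P ∧ q ∈ hananV P ∧ p ≠ q ∧ axisAligned p q ∧
  ∀ z ∈ hananV P, inBox p q z → z = p ∨ z = q

/-- All edges of the path `π` are edges of the Hanan grid `H(P)`. -/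
def OnGrid (P : Inst) (π : GPath) : Prop :=
  ∀ i : Fin π.k, IsHananEdge P (π.pts i.castSucc) (π.pts i.succ)

/-- `π ∈ Π_P(u)`: an M-path for the pair `u` that is a subgraph of the Hanan grid `H(P)`. -/
def InPi (P : Inst) (u : Point × Point) (π : GPath) : Prop :=
  IsMPath u.1 u.2 π ∧ OnGrid P π

/-- The network `∪_{v ∈ P} π_v` determined by a choice of M-paths. -/
def netOf (P : Inst) (f : Point × Point → GPath) : Finset (Sym2 Point) :=
  P.biUnion fun v => (f v).edges

/-- `f` gives a feasible solution in `Feas(P)`: an M-path on the Hanan grid for each pair. -/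
def IsFeasChoice (P : Inst) (f : Point × Point → GPath) : Prop :=
  ∀ v ∈ P, InPi P v (f v)

/-- `f` gives an optimal solution in `Opt(P)`. -/
def IsOptChoice (P : Inst) (f : Point × Point → GPath) : Prop :=
  IsFeasChoice P f ∧
  ∀ g : Point × Point → GPath, IsFeasChoice P g →
    netLength (netOf P f) ≤ netLength (netOf P g)

/-- Adjacency in the intersection graph `IG[P]`: `u ≠ v` and the induced subgrids
`H(P, u)` and `H(P, v)` share an edge. -/
def IGAdj (P : Inst) (u v : Point × Point) : Prop :=
  u ≠ v ∧ ∃ p q : Point, IsHananEdge P p q ∧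
    inBox u.1 u.2 p ∧ inBox u.1 u.2 q ∧ inBox v.1 v.2 p ∧ inBox v.1 v.2 q

/-- The total length `‖π₁ ∩ π₂‖` of the segments shared by two paths. -/
def sharedLen (π₁ π₂ : GPath) : ℝ := netLength (π₁.edges ∩ π₂.edges)

/-- A pair `(p, q)` with `p_x ≤ q_x` is regular if `p_y ≤ q_y`. -/
def Regular (u : Point × Point) : Prop := u.1.1 ≤ u.2.1 ∧ u.1.2 ≤ u.2.2

/-- A pair `(p, q)` with `p_x ≤ q_x` is flipped if `p_y ≥ q_y`. -/
def Flipped (u : Point × Point) : Prop := u.1.1 ≤ u.2.1 ∧ u.2.2 ≤ u.1.2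

/-- The intersection graph `IG[P]` as a simple graph on the pairs of `P`. -/
def IG (P : Inst) : SimpleGraph {v : Point × Point // v ∈ P} where
  Adj u v := IGAdj P u.1 v.1
  symm := by
    constructor
    rintro u v ⟨hne, p, q, he, h1, h2, h3, h4⟩
    exact ⟨hne.symm, p, q, he, h3, h4, h1, h2⟩
  loopless := ⟨fun u h => h.1 rfl⟩

/-!
An M-path for `(s, t)` has length `d(s, t)` while each of its steps is an axis-aligned segment, so
it attains the Manhattan triangle inequality at every vertex; hence all its vertices lie in
`B(s, t)`. Two feasible paths sharing an edge therefore belong to adjacent pairs of `IG[P]`, and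
triangle-freeness leaves every edge of `N` on at most two paths. For such multiplicities
inclusion–exclusion stops after the pairwise terms: summing `d(s, t) = ‖π_{(s,t)}‖` over `P`
counts each edge once per path through it, and the shared lengths remove the double counts.
-/

open Finset

lemma inf_le_and_le_sup_of_dist_add_dist_le {a b c : ℝ} (h : dist a b + dist b c ≤ dist a c) :
    a ⊓ c ≤ b ∧ b ≤ a ⊔ c := by
  rw [Real.dist_eq, Real.dist_eq, Real.dist_eq] at h
  constructor <;> cases le_total a c <;> cases le_total a b <;> cases le_total b c <;>
    simp_all [abs_of_nonneg, abs_of_nonpos] <;> linarith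

section Counting

variable {ι α M : Type*} [DecidableEq α] [AddCommMonoid M] (s : Finset ι) (E : ι → Finset α)
  (w : α → M)

lemma sum_sum_eq_sum_biUnion_card_smul :
    ∑ i ∈ s, ∑ a ∈ E i, w a = ∑ a ∈ s.biUnion E, #{i ∈ s | a ∈ E i} • w a := by
  rw [sum_comm' (t' := s.biUnion E) (s' := fun a => {i ∈ s | a ∈ E i})]
  · simp only [sum_const]
  · intro i a; simp only [mem_filter, mem_biUnion]; grind

lemma sum_offDiag_sum_inter_eq_sum_biUnion_card_offDiag_smul :
    ∑ p ∈ s.offDiag, ∑ a ∈ E p.1 ∩ E p.2, w a =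
      ∑ a ∈ s.biUnion E, #{i ∈ s | a ∈ E i}.offDiag • w a := by
  rw [sum_comm' (t' := s.biUnion E) (s' := fun a => {i ∈ s | a ∈ E i}.offDiag)]
  · simp only [sum_const]
  · intro p a; simp only [mem_offDiag, mem_inter, mem_filter, mem_biUnion]; grind

end Counting

lemma sum_biUnion_eq_sum_sub_half_sum_offDiag {ι α : Type*} [DecidableEq α]
    (s : Finset ι) (E : ι → Finset α) (w : α → ℝ) (h : ∀ a, #{i ∈ s | a ∈ E i} ≤ 2) :
    ∑ a ∈ s.biUnion E, w a =
      ∑ i ∈ s, ∑ a ∈ E i, w a - 1 / 2 * ∑ p ∈ s.offDiag, ∑ a ∈ E p.1 ∩ E p.2, w a := by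
  rw [sum_sum_eq_sum_biUnion_card_smul, sum_offDiag_sum_inter_eq_sum_biUnion_card_offDiag_smul,
    mul_sum, ← sum_sub_distrib]
  refine sum_congr rfl fun a ha => ?_
  have hpos : 0 < #{i ∈ s | a ∈ E i} := by
    obtain ⟨i, hi, hai⟩ := mem_biUnion.mp ha
    exact card_pos.mpr ⟨i, mem_filter.mpr ⟨hi, hai⟩⟩
  have hle := h a
  rw [offDiag_card]
  interval_cases #{i ∈ s | a ∈ E i} <;> simp only [nsmul_eq_mul] <;> push_cast <;> ring

lemma manh_eq_dist_add_dist (p q : Point) : manh p q = dist p.1 q.1 + dist p.2 q.2 := by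
  simp only [manh, Real.dist_eq]

lemma manh_le_Ico_sum_manh (Z : ℕ → Point) {m n : ℕ} (h : m ≤ n) :
    manh (Z m) (Z n) ≤ ∑ i ∈ Ico m n, manh (Z i) (Z (i + 1)) := by
  simp only [manh_eq_dist_add_dist, sum_add_distrib]
  exact add_le_add (dist_le_Ico_sum_dist (fun i => (Z i).1) h)
    (dist_le_Ico_sum_dist (fun i => (Z i).2) h)

lemma euclen_eq_manh {p q : Point} (h : axisAligned p q) : euclen p q = manh p q := by
  rcases h with h | h <;> simp [euclen, manh, h, Real.sqrt_sq_eq_abs]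

lemma inBox_of_manh_add_manh_le {s t z : Point} (h : manh s z + manh z t ≤ manh s t) :
    inBox s t z := by
  simp only [manh_eq_dist_add_dist] at h
  obtain ⟨hx₁, hx₂⟩ := inf_le_and_le_sup_of_dist_add_dist_le (a := s.1) (b := z.1) (c := t.1)
    (by linarith [dist_triangle s.2 z.2 t.2])
  obtain ⟨hy₁, hy₂⟩ := inf_le_and_le_sup_of_dist_add_dist_le (a := s.2) (b := z.2) (c := t.2)
    (by linarith [dist_triangle s.1 z.1 t.1])
  exact ⟨⟨hx₁, hy₁⟩, ⟨hx₂, hy₂⟩⟩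

namespace GPath

/-- The vertices of `π` as a sequence indexed by `ℕ`, constant after the last vertex. -/
def vert (π : GPath) (n : ℕ) : Point := π.pts ⟨min n π.k, Nat.lt_succ_of_le (min_le_right _ _)⟩

lemma vert_val (π : GPath) (j : Fin (π.k + 1)) : π.vert j = π.pts j :=
  congrArg π.pts (Fin.ext (min_eq_left (Nat.lt_succ_iff.mp j.2)))

lemma length_eq_sum_manh {π : GPath}
    (hax : ∀ i : Fin π.k, axisAligned (π.pts i.castSucc) (π.pts i.succ)) :
    π.length = ∑ i ∈ range π.k, manh (π.vert i) (π.vert (i + 1)) := by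
  rw [← Fin.sum_univ_eq_sum_range (fun i => manh (π.vert i) (π.vert (i + 1)))]
  refine sum_congr rfl fun i _ => ?_
  rw [euclen_eq_manh (hax i), ← π.vert_val i.castSucc, ← π.vert_val i.succ]
  rfl

lemma edge_injective (π : GPath) : Function.Injective π.edge := by
  intro i j hij
  rcases Sym2.eq_iff.mp hij with ⟨h, -⟩ | ⟨h₁, h₂⟩
  · exact Fin.castSucc_injective _ (π.inj h)
  · have e₁ := congrArg Fin.val (π.inj h₁)
    have e₂ := congrArg Fin.val (π.inj h₂)
    simp only [Fin.val_castSucc, Fin.val_succ] at e₁ e₂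
    omega

lemma netLength_edges (π : GPath) : netLength π.edges = π.length := by
  rw [netLength, edges, sum_image fun _ _ _ _ h => π.edge_injective h]
  rfl

end GPath

lemma IsMPath.manh_add_manh_le {s t : Point} {π : GPath} (h : IsMPath s t π)
    (j : Fin (π.k + 1)) : manh s (π.pts j) + manh (π.pts j) t ≤ manh s t := by
  obtain ⟨h₀, hlast, hax, hlen⟩ := h
  have hj : (j : ℕ) ≤ π.k := Nat.lt_succ_iff.mp j.2
  have hs : π.vert 0 = s := by simpa using (π.vert_val 0).trans h₀
  have ht : π.vert π.k = t := by simpa using (π.vert_val (Fin.last _)).trans hlast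
  rw [← hlen, π.length_eq_sum_manh hax, range_eq_Ico, ← sum_Ico_consecutive _ (Nat.zero_le j) hj,
    ← π.vert_val j, ← hs, ← ht]
  exact add_le_add (manh_le_Ico_sum_manh _ (Nat.zero_le j)) (manh_le_Ico_sum_manh _ hj)

lemma IsMPath.pts_mem_box {s t : Point} {π : GPath} (h : IsMPath s t π) (j : Fin (π.k + 1)) :
    inBox s t (π.pts j) :=
  inBox_of_manh_add_manh_le (h.manh_add_manh_le j)

lemma InPi.exists_hananEdge_of_mem_edges {P : Inst} {u : Point × Point} {π : GPath}
    (hπ : InPi P u π) {e : Sym2 Point} (he : e ∈ π.edges) :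
    ∃ p q : Point, e = s(p, q) ∧ IsHananEdge P p q ∧ inBox u.1 u.2 p ∧ inBox u.1 u.2 q := by
  obtain ⟨i, -, rfl⟩ := mem_image.mp he
  exact ⟨_, _, rfl, hπ.2 i, hπ.1.pts_mem_box _, hπ.1.pts_mem_box _⟩

lemma IGAdj.of_mem_edges {P : Inst} {u v : Point × Point} {πu πv : GPath} (huv : u ≠ v)
    (hu : InPi P u πu) (hv : InPi P v πv) {e : Sym2 Point} (heu : e ∈ πu.edges)
    (hev : e ∈ πv.edges) : IGAdj P u v := by
  obtain ⟨p, q, rfl, hpq, hp, hq⟩ := hu.exists_hananEdge_of_mem_edges heu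
  obtain ⟨p', q', he, -, hp', hq'⟩ := hv.exists_hananEdge_of_mem_edges hev
  rcases Sym2.eq_iff.mp he with ⟨rfl, rfl⟩ | ⟨rfl, rfl⟩
  · exact ⟨huv, p, q, hpq, hp, hq, hp', hq'⟩
  · exact ⟨huv, p, q, hpq, hp, hq, hq', hp'⟩

section Feasible

variable {P : Inst} {f : Point × Point → GPath}

/-- Three paths through one edge would make their pairs a triangle of `IG[P]`. -/
lemma card_filter_mem_edges_le_two
    (htf : ∀ u ∈ P, ∀ v ∈ P, ∀ w ∈ P, IGAdj P u v → IGAdj P v w → IGAdj P u w → False)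
    (hf : IsFeasChoice P f) (e : Sym2 Point) : #{v ∈ P | e ∈ (f v).edges} ≤ 2 := by
  by_contra! hlt
  obtain ⟨u, hu, v, hv, w, hw, huv, huw, hvw⟩ := two_lt_card.mp hlt
  simp only [mem_filter] at hu hv hw
  exact htf u hu.1 v hv.1 w hw.1 (.of_mem_edges huv (hf u hu.1) (hf v hv.1) hu.2 hv.2)
    (.of_mem_edges hvw (hf v hv.1) (hf w hw.1) hv.2 hw.2)
    (.of_mem_edges huw (hf u hu.1) (hf w hw.1) hu.2 hw.2)

lemma sum_manh_eq_sum_netLength_edges (hf : IsFeasChoice P f) :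
    ∑ v ∈ P, manh v.1 v.2 = ∑ v ∈ P, netLength (f v).edges :=
  sum_congr rfl fun v hv => by rw [GPath.netLength_edges, (hf v hv).1.2.2.2]

/-- Paths of non-adjacent pairs share no edge. -/
lemma sum_sum_ite_igAdj_sharedLen_eq_sum_offDiag (hf : IsFeasChoice P f) :
    ∑ u ∈ P, ∑ v ∈ P, (if IGAdj P u v then sharedLen (f u) (f v) else 0) =
      ∑ p ∈ P.offDiag, sharedLen (f p.1) (f p.2) := by
  rw [← sum_product' (f := fun u v => if IGAdj P u v then sharedLen (f u) (f v) else 0)]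
  have hdiag : ∀ p ∈ P ×ˢ P, p ∉ P.offDiag →
      (if IGAdj P p.1 p.2 then sharedLen (f p.1) (f p.2) else 0) = 0 := by
    intro p hp hpoff
    obtain ⟨hu, hv⟩ := mem_product.mp hp
    exact if_neg fun hadj => hpoff (mem_offDiag.mpr ⟨hu, hv, hadj.1⟩)
  rw [← sum_subset (fun p hp => by simp_all [mem_offDiag]) hdiag]
  refine sum_congr rfl fun ⟨u, v⟩ huv => ite_eq_left_iff.mpr fun hadj => ?_
  obtain ⟨hu, hv, hne⟩ := mem_offDiag.mp huv
  have hdisj : (f u).edges ∩ (f v).edges = ∅ := eq_empty_of_forall_notMem fun e he =>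
    hadj (.of_mem_edges hne (hf u hu) (hf v hv) (mem_inter.mp he).1 (mem_inter.mp he).2)
  rw [sharedLen, hdisj, netLength, sum_empty]

lemma netLength_netOf_of_triangleFree
    (htf : ∀ u ∈ P, ∀ v ∈ P, ∀ w ∈ P, IGAdj P u v → IGAdj P v w → IGAdj P u w → False)
    (hf : IsFeasChoice P f) :
    netLength (netOf P f) = (∑ v ∈ P, manh v.1 v.2) -
      (1 / 2) * ∑ u ∈ P, ∑ v ∈ P, (if IGAdj P u v then sharedLen (f u) (f v) else 0) := by
  rw [sum_manh_eq_sum_netLength_edges hf, sum_sum_ite_igAdj_sharedLen_eq_sum_offDiag hf]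
  exact sum_biUnion_eq_sum_sub_half_sum_offDiag P (fun v => (f v).edges) sym2Len
    (card_filter_mem_edges_le_two htf hf)

end Feasible

/-- If `IG[P]` is triangle-free, then the length of any feasible solution `N = (π_v)_{v ∈ P}`
equals `Σ_{(s,t) ∈ P} d(s,t)` minus the total length of segments shared by two M-paths (each
unordered adjacent pair counted once, whence the factor `1/2` on the ordered double sum).
In particular, `N` is optimal iff the total shared length is maximized. -/
theorem triangle_free_length_formula (P : Inst)
    (htf : ∀ u ∈ P, ∀ v ∈ P, ∀ w ∈ P,
      IGAdj P u v → IGAdj P v w → IGAdj P u w → False)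
    (f : Point × Point → GPath) (hf : IsFeasChoice P f) :
    netLength (netOf P f) =
      (∑ v ∈ P, manh v.1 v.2) -
        (1 / 2) * ∑ u ∈ P, ∑ v ∈ P,
          (if IGAdj P u v then sharedLen (f u) (f v) else 0) ∧
    (IsOptChoice P f ↔ ∀ g : Point × Point → GPath, IsFeasChoice P g →
      (∑ u ∈ P, ∑ v ∈ P, (if IGAdj P u v then sharedLen (g u) (g v) else 0)) ≤
      (∑ u ∈ P, ∑ v ∈ P, (if IGAdj P u v then sharedLen (f u) (f v) else 0))) := by
  have hlen := netLength_netOf_of_triangleFree htf hf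
  refine ⟨hlen, fun hopt g hg => ?_, fun hmax => ⟨hf, fun g hg => ?_⟩⟩
  · linarith [netLength_netOf_of_triangleFree htf hg, hopt.2 g hg]
  · linarith [netLength_netOf_of_triangleFree htf hg, hmax g hg]

end
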